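/- arXiv:2006.06428 — 2 statements merged into one kernel-verified Lean document; each statement's English description precedes it below -/
import Mathlib

section
/- Let a(x,y) be the affine-parametric coefficient with truncation a_r(x,y), and let the bilinear forms A and A_r be the weighted Dirichlet forms with coefficients a and a_r respectively. Under assumptions 0 < a0min ≤ a0 ≤ a0max and τ < 1, the forms A and A_r are equivalent: for all v ∈ V, θ_r A_r(v,v) ≤ A(v,v) ≤ Θ_r A_r(v,v), where θ_r = (1−τ)a0min / (a0max + a0min·τ_r) and Θ_r = (a0max + a0min·τ) / ((1−τ_r)a0min). -/
/-!
Since `|y_m| ≤ 1`, the parametric parts of `a` and `a_r` are bounded in absolute value by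
`a0min τ` and `a0min τ_r`, so pointwise `(1-τ) a0min ≤ a ≤ a0max + a0min τ` and
`(1-τ_r) a0min ≤ a_r ≤ a0max + a0min τ_r`. Comparing these ranges gives
`θ_r a_r ≤ a ≤ Θ_r a_r` pointwise, and integrating against the nonnegative weight `p |∇v|²`
gives the equivalence of the forms.
-/

open MeasureTheory

lemma abs_tsum_mul_le_tsum_abs {ι : Type*} {f y : ι → ℝ} (hf : Summable fun i => |f i|)
    (hy : ∀ i, |y i| ≤ 1) : |∑' i, f i * y i| ≤ ∑' i, |f i| :=
  tsum_of_norm_bounded (f := fun i => f i * y i) hf.hasSum fun i => by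
    simpa [Real.norm_eq_abs, abs_mul] using mul_le_of_le_one_right (abs_nonneg (f i)) (hy i)

lemma abs_sum_mul_le_sum_abs {ι : Type*} (s : Finset ι) {f y : ι → ℝ}
    (hy : ∀ i, |y i| ≤ 1) : |∑ i ∈ s, f i * y i| ≤ ∑ i ∈ s, |f i| :=
  (Finset.abs_sum_le_sum_abs _ _).trans <| Finset.sum_le_sum fun i _ => by
    simpa [abs_mul] using mul_le_of_le_one_right (abs_nonneg (f i)) (hy i)

lemma div_mul_le_of_le_of_le {A B lo hi : ℝ} (hlo : 0 ≤ lo) (hA : lo ≤ A) (hB : B ≤ hi)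
    (hhi : 0 < hi) : lo / hi * B ≤ A :=
  calc lo / hi * B ≤ lo / hi * hi := by gcongr
    _ = lo := div_mul_cancel₀ lo hhi.ne'
    _ ≤ A := hA

lemma le_div_mul_of_le_of_le {A B lo hi : ℝ} (hhi : 0 ≤ hi) (hA : A ≤ hi) (hB : lo ≤ B)
    (hlo : 0 < lo) : A ≤ hi / lo * B :=
  calc A ≤ hi := hA
    _ = hi / lo * lo := (div_mul_cancel₀ hi hlo.ne').symm
    _ ≤ hi / lo * B := by gcongr

lemma add_mem_Icc_of_abs_le {a0 a0min a0max s t : ℝ} (ha0 : a0min ≤ a0 ∧ a0 ≤ a0max)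
    (hs : |s| ≤ a0min * t) : (1 - t) * a0min ≤ a0 + s ∧ a0 + s ≤ a0max + a0min * t := by
  have := abs_le.mp hs
  constructor <;> linarith

lemma perturbed_coefficients_equiv {a0 a0min a0max s sr τ τr : ℝ} (ha0min : 0 < a0min)
    (ha0 : a0min ≤ a0 ∧ a0 ≤ a0max) (hs : |s| ≤ a0min * τ) (hsr : |sr| ≤ a0min * τr)
    (hτ1 : τ < 1) (hτrτ : τr ≤ τ) :
    (1 - τ) * a0min / (a0max + a0min * τr) * (a0 + sr) ≤ a0 + s ∧
      a0 + s ≤ (a0max + a0min * τ) / ((1 - τr) * a0min) * (a0 + sr) := by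
  obtain ⟨hlo, hhi⟩ := add_mem_Icc_of_abs_le ha0 hs
  obtain ⟨hlor, hhir⟩ := add_mem_Icc_of_abs_le ha0 hsr
  have hτr0 : 0 ≤ τr := nonneg_of_mul_nonneg_right ((abs_nonneg sr).trans hsr) ha0min
  have hlo0 : 0 ≤ (1 - τ) * a0min := mul_nonneg (by linarith) ha0min.le
  refine ⟨div_mul_le_of_le_of_le hlo0 hlo hhir ?_,
    le_div_mul_of_le_of_le (hlo0.trans (hlo.trans hhi)) hhi hlor ?_⟩
  · nlinarith [ha0.1.trans ha0.2]
  · exact mul_pos (by linarith) ha0min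

/-- `b m` stands for `a_{m+1}`, `Y y m` for `y_{m+1}`, and `G` for the spatial gradient `∇v`. -/
theorem truncated_form_equivalent_general
    {Ω Γ : Type*} [MeasurableSpace Ω] [MeasurableSpace Γ]
    (μ : Measure Ω) (ν : Measure Γ) {d : ℕ} (r : ℕ)
    (p : Γ → ℝ) (hp : ∀ y, 0 ≤ p y)
    (Y : Γ → ℕ → ℝ) (hY : ∀ᵐ y ∂ν, ∀ m, |Y y m| ≤ 1)
    (a0 : Ω → ℝ) (b : ℕ → Ω → ℝ) (a0min a0max τ τr : ℝ)
    (ha0min : 0 < a0min)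
    (ha0 : ∀ᵐ x ∂μ, a0min ≤ a0 x ∧ a0 x ≤ a0max)
    (hsum : ∀ x, Summable fun m => |b m x|)
    (hτ : ∀ᵐ x ∂μ, (∑' m, |b m x|) ≤ a0min * τ)
    (hτr : ∀ᵐ x ∂μ, (∑ m ∈ Finset.range r, |b m x|) ≤ a0min * τr)
    (hτ1 : τ < 1) (hτrτ : τr ≤ τ)
    (G : Ω × Γ → EuclideanSpace ℝ (Fin d))
    (hIA : Integrable
      (fun z => p z.2 * ((a0 z.1 + ∑' m, b m z.1 * Y z.2 m) * ‖G z‖ ^ 2)) (μ.prod ν))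
    (hIAr : Integrable
      (fun z => p z.2 * ((a0 z.1 + ∑ m ∈ Finset.range r, b m z.1 * Y z.2 m) * ‖G z‖ ^ 2))
      (μ.prod ν)) :
    ((1 - τ) * a0min / (a0max + a0min * τr)) *
        ∫ z, p z.2 * ((a0 z.1 + ∑ m ∈ Finset.range r, b m z.1 * Y z.2 m) * ‖G z‖ ^ 2)
          ∂(μ.prod ν)
      ≤ ∫ z, p z.2 * ((a0 z.1 + ∑' m, b m z.1 * Y z.2 m) * ‖G z‖ ^ 2) ∂(μ.prod ν) ∧
    ∫ z, p z.2 * ((a0 z.1 + ∑' m, b m z.1 * Y z.2 m) * ‖G z‖ ^ 2) ∂(μ.prod ν)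
      ≤ ((a0max + a0min * τ) / ((1 - τr) * a0min)) *
        ∫ z, p z.2 * ((a0 z.1 + ∑ m ∈ Finset.range r, b m z.1 * Y z.2 m) * ‖G z‖ ^ 2)
          ∂(μ.prod ν) := by
  have hx : ∀ᵐ z ∂μ.prod ν, (a0min ≤ a0 z.1 ∧ a0 z.1 ≤ a0max) ∧
      (∑' m, |b m z.1|) ≤ a0min * τ ∧ (∑ m ∈ Finset.range r, |b m z.1|) ≤ a0min * τr :=
    Measure.quasiMeasurePreserving_fst.ae (ha0.and (hτ.and hτr))
  have hy : ∀ᵐ z ∂μ.prod ν, ∀ m, |Y z.2 m| ≤ 1 := Measure.quasiMeasurePreserving_snd.ae hY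
  have hcoeff : ∀ᵐ z ∂μ.prod ν,
      (1 - τ) * a0min / (a0max + a0min * τr) *
          (a0 z.1 + ∑ m ∈ Finset.range r, b m z.1 * Y z.2 m)
        ≤ a0 z.1 + ∑' m, b m z.1 * Y z.2 m ∧
      a0 z.1 + ∑' m, b m z.1 * Y z.2 m
        ≤ (a0max + a0min * τ) / ((1 - τr) * a0min) *
          (a0 z.1 + ∑ m ∈ Finset.range r, b m z.1 * Y z.2 m) := by
    filter_upwards [hx, hy] with z ⟨ha0z, hτz, hτrz⟩ hYz
    exact perturbed_coefficients_equiv ha0min ha0z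
      ((abs_tsum_mul_le_tsum_abs (hsum z.1) hYz).trans hτz)
      ((abs_sum_mul_le_sum_abs _ hYz).trans hτrz) hτ1 hτrτ
  rw [← integral_const_mul, ← integral_const_mul]
  constructor <;> refine integral_mono_ae (by fun_prop) (by fun_prop) ?_ <;>
    filter_upwards [hcoeff] with z ⟨hlow, hup⟩ <;>
    have hw := mul_nonneg (hp z.2) (sq_nonneg ‖G z‖)
  · linarith [mul_le_mul_of_nonneg_left hlow hw]
  · linarith [mul_le_mul_of_nonneg_left hup hw]

/-- Equivalence of the weighted Dirichlet forms `A` (with the full affine-parametric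
coefficient `a(x,y) = a0(x) + Σ_{m=1}^∞ a_m(x) y_m`) and `A_r` (with the `r`-term
truncation), with constants `θ_r = (1-τ)a0min/(a0max + a0min τ_r)` and
`Θ_r = (a0max + a0min τ)/((1-τ_r)a0min)`.  Here `b m` plays the role of `a_{m+1}`,
`Y y m` is the `m`-th coordinate of the parameter `y ∈ Γ = [-1,1]^ℕ` and `G`
represents the spatial gradient of an element `v ∈ V`, so `‖G z‖² = |∇v(x,y)|²`. -/
theorem truncated_form_equivalent
    {Ω Γ : Type*} [MeasurableSpace Ω] [MeasurableSpace Γ]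
    (μ : Measure Ω) (ν : Measure Γ) {d : ℕ} (r : ℕ)
    (p : Γ → ℝ) (hp : ∀ y, 0 ≤ p y)
    (Y : Γ → ℕ → ℝ) (hY : ∀ᵐ y ∂ν, ∀ m, |Y y m| ≤ 1)
    (a0 : Ω → ℝ) (b : ℕ → Ω → ℝ) (a0min a0max τ τr : ℝ)
    (ha0min : 0 < a0min)
    (ha0 : ∀ᵐ x ∂μ, a0min ≤ a0 x ∧ a0 x ≤ a0max)
    (hsum : ∀ x, Summable fun m => |b m x|)
    (hτ : ∀ᵐ x ∂μ, (∑' m, |b m x|) ≤ a0min * τ)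
    (hτr : ∀ᵐ x ∂μ, (∑ m ∈ Finset.range r, |b m x|) ≤ a0min * τr)
    (hτ1 : τ < 1) (hτr0 : 0 ≤ τr) (hτrτ : τr ≤ τ)
    (G : Ω × Γ → EuclideanSpace ℝ (Fin d))
    (hIA : Integrable
      (fun z => p z.2 * ((a0 z.1 + ∑' m, b m z.1 * Y z.2 m) * ‖G z‖ ^ 2)) (μ.prod ν))
    (hIAr : Integrable
      (fun z => p z.2 * ((a0 z.1 + ∑ m ∈ Finset.range r, b m z.1 * Y z.2 m) * ‖G z‖ ^ 2))
      (μ.prod ν)) :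
    ((1 - τ) * a0min / (a0max + a0min * τr)) *
        ∫ z, p z.2 * ((a0 z.1 + ∑ m ∈ Finset.range r, b m z.1 * Y z.2 m) * ‖G z‖ ^ 2)
          ∂(μ.prod ν)
      ≤ ∫ z, p z.2 * ((a0 z.1 + ∑' m, b m z.1 * Y z.2 m) * ‖G z‖ ^ 2) ∂(μ.prod ν) ∧
    ∫ z, p z.2 * ((a0 z.1 + ∑' m, b m z.1 * Y z.2 m) * ‖G z‖ ^ 2) ∂(μ.prod ν)
      ≤ ((a0max + a0min * τ) / ((1 - τr) * a0min)) *
        ∫ z, p z.2 * ((a0 z.1 + ∑ m ∈ Finset.range r, b m z.1 * Y z.2 m) * ‖G z‖ ^ 2)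
          ∂(μ.prod ν) :=
  truncated_form_equivalent_general μ ν r p hp Y hY a0 b a0min a0max τ τr ha0min ha0 hsum hτ hτr hτ1
    hτrτ G hIA hIAr
end

section
/- Let P_r = D0 + S_r + S_r^T be symmetric positive definite with λ_min(D0^{-1/2} P_r D0^{-1/2}) ≥ 1 − τ_r > 0 and σ_max(D0^{-1/2} S_r D0^{-1/2}) ≤ c. Then the SBGS approximation P̃_r = (D0 + S_r) D0⁻¹ (D0 + S_r^T) satisfies, for every nonzero v, 1 ≤ (v^T P̃_r v)/(v^T P_r v) ≤ 1 + c²/(1 − τ_r); i.e., the spectrum of P_r⁻¹ P̃_r lies in [1, 1 + δ_r] with δ_r = c²/(1 − τ_r). -/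
open Matrix

/-- The largest singular value (spectral norm) of a real matrix. -/
noncomputable def sigmaMax {m n : Type*} [Fintype m] [Fintype n] [DecidableEq n]
    (A : Matrix m n ℝ) : ℝ :=
  ‖LinearMap.toContinuousLinearMap (Matrix.toEuclideanLin A)‖

/-- The square root of a positive semidefinite matrix, as `Matrix.PosSemidef.sqrt` was
defined in the older Mathlib (removed since). -/
noncomputable def posSemidefSqrt {n : Type*} [Fintype n] [DecidableEq n]
    {A : Matrix n n ℝ} (hA : A.PosSemidef) : Matrix n n ℝ :=
  hA.1.eigenvectorUnitary.1 * diagonal ((↑) ∘ (√·) ∘ hA.1.eigenvalues) *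
    (star hA.1.eigenvectorUnitary : Matrix n n ℝ)

/-!
Expanding the product gives `P̃ = P + S D0⁻¹ Sᵀ`, so the quotient is `1 + b / a` with
`a = vᵀ P v > 0` and `b = vᵀ S D0⁻¹ Sᵀ v ≥ 0`. In the variable `w = D0^{1/2} v` one has
`a ≥ (1 - τ) ‖w‖²` and `b = ‖Mᵀ w‖² ≤ c² ‖w‖²` with `M = D0^{-1/2} S D0^{-1/2}`, whence
`b / a ≤ c² / (1 - τ)`.
-/

open scoped MatrixOrder Matrix.Norms.L2Operator

section Sqrt

variable {n : Type*} [Fintype n] [DecidableEq n] {A : Matrix n n ℝ}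

lemma posSemidefSqrt_eq_sqrt (hA : A.PosSemidef) : posSemidefSqrt hA = CFC.sqrt A := by
  rw [CFC.sqrt_eq_real_sqrt A hA.nonneg, cfcₙ_eq_cfc, hA.1.cfc_eq, IsHermitian.cfc,
    Unitary.conjStarAlgAut_apply]
  rfl

lemma posSemidefSqrt_mul_self (hA : A.PosSemidef) :
    posSemidefSqrt hA * posSemidefSqrt hA = A := by
  rw [posSemidefSqrt_eq_sqrt, CFC.sqrt_mul_sqrt_self A hA.nonneg]

lemma transpose_posSemidefSqrt (hA : A.PosSemidef) :
    (posSemidefSqrt hA)ᵀ = posSemidefSqrt hA := by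
  rw [posSemidefSqrt_eq_sqrt, ← conjTranspose_eq_transpose_of_trivial]
  exact (CFC.sqrt_nonneg A).isSelfAdjoint.star_eq

lemma isUnit_det_posSemidefSqrt (hA : A.PosDef) :
    IsUnit (posSemidefSqrt hA.posSemidef).det := by
  rw [← isUnit_iff_isUnit_det, posSemidefSqrt_eq_sqrt, CFC.isUnit_sqrt_iff A hA.posSemidef.nonneg]
  exact hA.isUnit

end Sqrt

lemma sigmaMax_eq_norm {m n : Type*} [Fintype m] [Fintype n] [DecidableEq n] (M : Matrix m n ℝ) :
    sigmaMax M = ‖M‖ := rfl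

lemma norm_toLp_sq {m : Type*} [Fintype m] (x : m → ℝ) :
    ‖WithLp.toLp 2 x‖ ^ 2 = x ⬝ᵥ x := by
  rw [← real_inner_self_eq_norm_sq, EuclideanSpace.inner_toLp_toLp, star_trivial]

lemma dotProduct_mul_transpose_mulVec_le {m n : Type*} [Fintype m] [Fintype n] [DecidableEq m]
    [DecidableEq n] {M : Matrix m n ℝ} {c : ℝ} (hM : sigmaMax M ≤ c) (w : m → ℝ) :
    w ⬝ᵥ (M * Mᵀ) *ᵥ w ≤ c ^ 2 * (w ⬝ᵥ w) := by
  have hnorm : ‖WithLp.toLp 2 (Mᵀ *ᵥ w)‖ ≤ c * ‖WithLp.toLp 2 w‖ := by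
    rw [sigmaMax_eq_norm] at hM
    refine le_trans ?_ (mul_le_mul_of_nonneg_right hM (norm_nonneg _))
    simpa [← conjTranspose_eq_transpose_of_trivial, l2_opNorm_conjTranspose] using
      l2_opNorm_mulVec Mᵀ (WithLp.toLp 2 w)
  have hquad : w ⬝ᵥ (M * Mᵀ) *ᵥ w = (Mᵀ *ᵥ w) ⬝ᵥ (Mᵀ *ᵥ w) := by
    rw [← mulVec_mulVec, dotProduct_mulVec, ← mulVec_transpose]
  rw [hquad, ← norm_toLp_sq, ← norm_toLp_sq, ← mul_pow]
  exact pow_le_pow_left₀ (norm_nonneg _) hnorm 2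

lemma add_mul_inv_mul_add {n R : Type*} [Fintype n] [DecidableEq n] [CommRing R]
    {D : Matrix n n R} (hD : IsUnit D.det) (S T : Matrix n n R) :
    (D + S) * D⁻¹ * (D + T) = D + S + T + S * D⁻¹ * T := by
  have h1 : D * D⁻¹ = 1 := mul_nonsing_inv D hD
  have h2 : D⁻¹ * D = 1 := nonsing_inv_mul D hD
  calc (D + S) * D⁻¹ * (D + T)
      = D * D⁻¹ * D + D * D⁻¹ * T + S * (D⁻¹ * D) + S * D⁻¹ * T := by noncomm_ring
    _ = D + S + T + S * D⁻¹ * T := by rw [h1, h2]; noncomm_ring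

lemma dotProduct_transpose_mul_mul_mulVec {n R : Type*} [Fintype n] [DecidableEq n]
    [CommSemiring R] {Q L : Matrix n n R} (hLQ : L * Q = 1) (A : Matrix n n R) (v : n → R) :
    (Q *ᵥ v) ⬝ᵥ (Lᵀ * A * L) *ᵥ (Q *ᵥ v) = v ⬝ᵥ A *ᵥ v := by
  rw [mulVec_mulVec, Matrix.mul_assoc _ L Q, hLQ, Matrix.mul_one, ← mulVec_mulVec,
    dotProduct_mulVec, vecMul_transpose, mulVec_mulVec, hLQ, one_mulVec]

lemma one_le_add_div_self_and_le {a b x t k : ℝ} (ha : 0 < a) (hb : 0 ≤ b) (ht : 0 < t)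
    (hk : 0 ≤ k) (hxa : t * x ≤ a) (hbx : b ≤ k * x) :
    1 ≤ (a + b) / a ∧ (a + b) / a ≤ 1 + k / t := by
  have hba : b ≤ k / t * a := by
    calc b ≤ k * x := hbx
      _ = k / t * (t * x) := by field_simp
      _ ≤ k / t * a := by gcongr
  constructor
  · rw [le_div_iff₀ ha]; linarith
  · rw [div_le_iff₀ ha]; linarith

theorem sbgs_spectral_bounds_general
    {n : ℕ} (D0 S : Matrix (Fin n) (Fin n) ℝ)
    (hD0 : D0.PosDef) (hP : (D0 + S + Sᵀ).PosDef)
    (τr c : ℝ) (hτr : τr < 1)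
    (hlam : ∀ w : Fin n → ℝ, (1 - τr) * (w ⬝ᵥ w) ≤
      w ⬝ᵥ ((posSemidefSqrt hD0.posSemidef)⁻¹ * (D0 + S + Sᵀ) *
        (posSemidefSqrt hD0.posSemidef)⁻¹).mulVec w)
    (hσ : sigmaMax ((posSemidefSqrt hD0.posSemidef)⁻¹ * S * (posSemidefSqrt hD0.posSemidef)⁻¹) ≤ c) :
    ∀ v : Fin n → ℝ, v ≠ 0 →
      1 ≤ (v ⬝ᵥ ((D0 + S) * D0⁻¹ * (D0 + Sᵀ)).mulVec v) /
            (v ⬝ᵥ (D0 + S + Sᵀ).mulVec v) ∧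
      (v ⬝ᵥ ((D0 + S) * D0⁻¹ * (D0 + Sᵀ)).mulVec v) /
            (v ⬝ᵥ (D0 + S + Sᵀ).mulVec v) ≤ 1 + c ^ 2 / (1 - τr) := by
  intro v hv
  set Q := posSemidefSqrt hD0.posSemidef
  have hQinv : Q⁻¹ * Q = 1 := nonsing_inv_mul Q (isUnit_det_posSemidefSqrt hD0)
  have hQinv_transpose : (Q⁻¹)ᵀ = Q⁻¹ := by
    rw [transpose_nonsing_inv, transpose_posSemidefSqrt]
  have hD0inv : D0⁻¹ = Q⁻¹ * Q⁻¹ := by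
    rw [← posSemidefSqrt_mul_self hD0.posSemidef, Matrix.mul_inv_rev]
  have hlower : (1 - τr) * ((Q *ᵥ v) ⬝ᵥ (Q *ᵥ v)) ≤ v ⬝ᵥ (D0 + S + Sᵀ) *ᵥ v := by
    rw [← dotProduct_transpose_mul_mul_mulVec hQinv, hQinv_transpose]
    exact hlam (Q *ᵥ v)
  have hupper : v ⬝ᵥ (S * D0⁻¹ * Sᵀ) *ᵥ v ≤ c ^ 2 * ((Q *ᵥ v) ⬝ᵥ (Q *ᵥ v)) := by
    set M := Q⁻¹ * S * Q⁻¹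
    have hMM : (Q⁻¹)ᵀ * (S * D0⁻¹ * Sᵀ) * Q⁻¹ = M * Mᵀ := by
      rw [hQinv_transpose, hD0inv]
      simp only [M, transpose_mul, hQinv_transpose, Matrix.mul_assoc]
    rw [← dotProduct_transpose_mul_mul_mulVec hQinv, hMM]
    exact dotProduct_mul_transpose_mulVec_le hσ _
  have hcorr : 0 ≤ v ⬝ᵥ (S * D0⁻¹ * Sᵀ) *ᵥ v := by
    simpa using (hD0.inv.posSemidef.mul_mul_conjTranspose_same S).dotProduct_mulVec_nonneg v
  rw [add_mul_inv_mul_add hD0.det_pos.ne'.isUnit S Sᵀ, add_mulVec, dotProduct_add]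
  exact one_le_add_div_self_and_le (by simpa using hP.dotProduct_mulVec_pos hv) hcorr
    (sub_pos.2 hτr) (sq_nonneg c) hlower hupper

/-- Spectral bounds for the SBGS approximation: if
`λ_min(D0^{-1/2} P_r D0^{-1/2}) ≥ 1 − τ_r > 0` (stated in Rayleigh-quotient form)
and `σ_max(D0^{-1/2} S_r D0^{-1/2}) ≤ c`, then the spectrum of `P_r⁻¹ P̃_r` lies in
`[1, 1 + c²/(1 − τ_r)]`, i.e. for every nonzero `v`,
`1 ≤ vᵀP̃_r v / vᵀP_r v ≤ 1 + c²/(1 − τ_r)`. -/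
theorem sbgs_spectral_bounds
    {n : ℕ} (D0 S : Matrix (Fin n) (Fin n) ℝ)
    (hD0 : D0.PosDef) (hP : (D0 + S + Sᵀ).PosDef)
    (τr c : ℝ) (hτr : τr < 1) (hc : 0 ≤ c)
    (hlam : ∀ w : Fin n → ℝ, (1 - τr) * (w ⬝ᵥ w) ≤
      w ⬝ᵥ ((posSemidefSqrt hD0.posSemidef)⁻¹ * (D0 + S + Sᵀ) *
        (posSemidefSqrt hD0.posSemidef)⁻¹).mulVec w)
    (hσ : sigmaMax ((posSemidefSqrt hD0.posSemidef)⁻¹ * S * (posSemidefSqrt hD0.posSemidef)⁻¹) ≤ c) :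
    ∀ v : Fin n → ℝ, v ≠ 0 →
      1 ≤ (v ⬝ᵥ ((D0 + S) * D0⁻¹ * (D0 + Sᵀ)).mulVec v) /
            (v ⬝ᵥ (D0 + S + Sᵀ).mulVec v) ∧
      (v ⬝ᵥ ((D0 + S) * D0⁻¹ * (D0 + Sᵀ)).mulVec v) /
            (v ⬝ᵥ (D0 + S + Sᵀ).mulVec v) ≤ 1 + c ^ 2 / (1 - τr) :=
  sbgs_spectral_bounds_general D0 S hD0 hP τr c hτr hlam hσ
end
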